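/- Let B be the k-algebra with generators b_{ij} (1 ≤ i < j ≤ n+1) and relations: b_{ij}b_{im} = q b_{im}b_{ij} for j < m; b_{ij}b_{lj} = q b_{lj}b_{ij} for i < l; b_{ij}b_{lm} = b_{lm}b_{ij} for i < l, j > m; and for i < l, j < m: b_{ij}b_{lm} = b_{lm}b_{ij} if j < l, b_{ij}b_{lm} = q⁻¹b_{lm}b_{ij} + q⁻¹q̂ b_{im} if j = l, b_{ij}b_{lm} = b_{lm}b_{ij} + q̂ b_{im}b_{lj} if j > l. Then there is a well-defined k-algebra homomorphism ψ : B → O_q(B⁺) with ψ(b_{ij}) = y_{ij}, and ψ is an isomorphism of B onto the subalgebra O_q(N⁺). -/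

import Mathlib

open scoped TensorProduct

noncomputable section

namespace QSL

/-- The generator `X i j` of the free algebra underlying `O_q(SL_{n+1})`. -/
def Xf (k : Type) [Field k] (n : ℕ) (i j : Fin (n+1)) :
    FreeAlgebra k (Fin (n+1) × Fin (n+1)) :=
  FreeAlgebra.ι k (i, j)

/-- The number of inversions (the length `ℓ(σ)`) of a permutation. -/
def invCount {m : ℕ} (σ : Equiv.Perm (Fin m)) : ℕ :=
  (Finset.univ.filter (fun p : Fin m × Fin m => p.1 < p.2 ∧ σ p.2 < σ p.1)).card

/-- The quantum determinant `∑_σ (-q)^{ℓ(σ)} X_{1σ(1)} ⋯ X_{n+1,σ(n+1)}`. -/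
def qdet (k : Type) [Field k] (q : k) (n : ℕ) : FreeAlgebra k (Fin (n+1) × Fin (n+1)) :=
  ∑ σ : Equiv.Perm (Fin (n+1)),
    ((-q) ^ invCount σ) • (List.ofFn fun i => Xf k n i (σ i)).prod

/-- Defining relations of `O_q(SL_{n+1})`. -/
inductive SLRel (k : Type) [Field k] (q : k) (n : ℕ) :
    FreeAlgebra k (Fin (n+1) × Fin (n+1)) → FreeAlgebra k (Fin (n+1) × Fin (n+1)) → Prop
  | row {i j m : Fin (n+1)} (h : j < m) :
      SLRel k q n (Xf k n i j * Xf k n i m) (q • (Xf k n i m * Xf k n i j))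
  | col {i l j : Fin (n+1)} (h : i < l) :
      SLRel k q n (Xf k n i j * Xf k n l j) (q • (Xf k n l j * Xf k n i j))
  | swap {i l j m : Fin (n+1)} (h1 : i < l) (h2 : m < j) :
      SLRel k q n (Xf k n i j * Xf k n l m) (Xf k n l m * Xf k n i j)
  | mixed {i l j m : Fin (n+1)} (h1 : i < l) (h2 : j < m) :
      SLRel k q n (Xf k n i j * Xf k n l m)
        (Xf k n l m * Xf k n i j + (q - q⁻¹) • (Xf k n i m * Xf k n l j))
  | det : SLRel k q n (qdet k q n) 1

/-- The quantized coordinate ring `O_q(SL_{n+1})`. -/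
abbrev OqSL (k : Type) [Field k] (q : k) (n : ℕ) := RingQuot (SLRel k q n)

/-- The generator `X i j` of `O_q(SL_{n+1})`. -/
def XSL (k : Type) [Field k] (q : k) (n : ℕ) (i j : Fin (n+1)) : OqSL k q n :=
  RingQuot.mkAlgHom k (SLRel k q n) (Xf k n i j)

/-- Relations `X i j = 0` for `i > j`, defining `O_q(B⁺)`. -/
inductive BpRel (k : Type) [Field k] (q : k) (n : ℕ) : OqSL k q n → OqSL k q n → Prop
  | zero {i j : Fin (n+1)} (h : j < i) : BpRel k q n (XSL k q n i j) 0

/-- Relations `X i j = 0` for `i < j`, defining `O_q(B⁻)`. -/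
inductive BmRel (k : Type) [Field k] (q : k) (n : ℕ) : OqSL k q n → OqSL k q n → Prop
  | zero {i j : Fin (n+1)} (h : i < j) : BmRel k q n (XSL k q n i j) 0

/-- Relations `X i j = 0` for `i ≠ j`, defining `O_q(T)`. -/
inductive TRel (k : Type) [Field k] (q : k) (n : ℕ) : OqSL k q n → OqSL k q n → Prop
  | zero {i j : Fin (n+1)} (h : i ≠ j) : TRel k q n (XSL k q n i j) 0

/-- The quantized coordinate ring `O_q(B⁺)` of the positive Borel. -/
abbrev OqBp (k : Type) [Field k] (q : k) (n : ℕ) := RingQuot (BpRel k q n)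

/-- The quantized coordinate ring `O_q(B⁻)` of the negative Borel. -/
abbrev OqBm (k : Type) [Field k] (q : k) (n : ℕ) := RingQuot (BmRel k q n)

/-- The quantized coordinate ring `O_q(T)` of the maximal torus. -/
abbrev OqT (k : Type) [Field k] (q : k) (n : ℕ) := RingQuot (TRel k q n)

/-- The coset of `X i j` in `O_q(B⁺)`. -/
def XBp (k : Type) [Field k] (q : k) (n : ℕ) (i j : Fin (n+1)) : OqBp k q n :=
  RingQuot.mkAlgHom k (BpRel k q n) (XSL k q n i j)

/-- The coset of `X i j` in `O_q(B⁻)`. -/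
def XBm (k : Type) [Field k] (q : k) (n : ℕ) (i j : Fin (n+1)) : OqBm k q n :=
  RingQuot.mkAlgHom k (BmRel k q n) (XSL k q n i j)

/-- The coset `Y i i` of `X i i` in `O_q(T)`. -/
def YT (k : Type) [Field k] (q : k) (n : ℕ) (i : Fin (n+1)) : OqT k q n :=
  RingQuot.mkAlgHom k (TRel k q n) (XSL k q n i i)

/-- `y i j = X_{ii}⁻¹ X_{ij}` in `O_q(B⁺)`. -/
def yY (k : Type) [Field k] (q : k) (n : ℕ) (i j : Fin (n+1)) : OqBp k q n :=
  Ring.inverse (XBp k q n i i) * XBp k q n i j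

/-- `z i j = X_{ij} X_{jj}⁻¹` in `O_q(B⁺)`. -/
def zZ (k : Type) [Field k] (q : k) (n : ℕ) (i j : Fin (n+1)) : OqBp k q n :=
  XBp k q n i j * Ring.inverse (XBp k q n j j)

/-- The subalgebra `O_q(N⁺)` of `O_q(B⁺)`, generated by the `X_{ii}⁻¹X_{ij}`, `i < j`. -/
def OqNp (k : Type) [Field k] (q : k) (n : ℕ) : Subalgebra k (OqBp k q n) :=
  Algebra.adjoin k {a | ∃ i j : Fin (n+1), i < j ∧ a = yY k q n i j}

/-- The subalgebra `O_q(N⁺)'` of `O_q(B⁺)`, generated by the `X_{ij}X_{jj}⁻¹`, `i < j`. -/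
def OqNp' (k : Type) [Field k] (q : k) (n : ℕ) : Subalgebra k (OqBp k q n) :=
  Algebra.adjoin k {a | ∃ i j : Fin (n+1), i < j ∧ a = zZ k q n i j}

/-- `X_{jj}⁻¹ X_{ji}` in `O_q(B⁻)` (for `i < j`). -/
def yNm (k : Type) [Field k] (q : k) (n : ℕ) (i j : Fin (n+1)) : OqBm k q n :=
  Ring.inverse (XBm k q n j j) * XBm k q n j i

/-- `X_{ji} X_{ii}⁻¹` in `O_q(B⁻)` (for `i < j`). -/
def zNm (k : Type) [Field k] (q : k) (n : ℕ) (i j : Fin (n+1)) : OqBm k q n :=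
  XBm k q n j i * Ring.inverse (XBm k q n i i)

/-- The subalgebra `O_q(N⁻)` of `O_q(B⁻)`, generated by the `X_{jj}⁻¹X_{ji}`, `i < j`. -/
def OqNm (k : Type) [Field k] (q : k) (n : ℕ) : Subalgebra k (OqBm k q n) :=
  Algebra.adjoin k {a | ∃ i j : Fin (n+1), i < j ∧ a = yNm k q n i j}

/-- The subalgebra `O_q(N⁻)'` of `O_q(B⁻)`, generated by the `X_{ji}X_{ii}⁻¹`, `i < j`. -/
def OqNm' (k : Type) [Field k] (q : k) (n : ℕ) : Subalgebra k (OqBm k q n) :=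
  Algebra.adjoin k {a | ∃ i j : Fin (n+1), i < j ∧ a = zNm k q n i j}

end QSL

namespace QSL

/-- The generator `b i j` (for `i < j`) of the free algebra underlying the presented algebra `B`. -/
def bf (k : Type) [Field k] (n : ℕ) (i j : Fin (n+1)) (h : i < j) :
    FreeAlgebra k {p : Fin (n+1) × Fin (n+1) // p.1 < p.2} :=
  FreeAlgebra.ι k ⟨(i, j), h⟩

/-- The defining relations of the presented algebra `B`. -/
inductive BRel (k : Type) [Field k] (q : k) (n : ℕ) :
    FreeAlgebra k {p : Fin (n+1) × Fin (n+1) // p.1 < p.2} →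
    FreeAlgebra k {p : Fin (n+1) × Fin (n+1) // p.1 < p.2} → Prop
  | row {i j m : Fin (n+1)} (h1 : i < j) (h2 : j < m) :
      BRel k q n (bf k n i j h1 * bf k n i m (h1.trans h2))
        (q • (bf k n i m (h1.trans h2) * bf k n i j h1))
  | col {i l j : Fin (n+1)} (h1 : i < l) (h2 : l < j) :
      BRel k q n (bf k n i j (h1.trans h2) * bf k n l j h2)
        (q • (bf k n l j h2 * bf k n i j (h1.trans h2)))
  | swap {i l m j : Fin (n+1)} (h1 : i < l) (h2 : l < m) (h3 : m < j) :
      BRel k q n (bf k n i j ((h1.trans h2).trans h3) * bf k n l m h2)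
        (bf k n l m h2 * bf k n i j ((h1.trans h2).trans h3))
  | comm {i j l m : Fin (n+1)} (h1 : i < j) (h2 : j < l) (h3 : l < m) :
      BRel k q n (bf k n i j h1 * bf k n l m h3)
        (bf k n l m h3 * bf k n i j h1)
  | adj {i j m : Fin (n+1)} (h1 : i < j) (h2 : j < m) :
      BRel k q n (bf k n i j h1 * bf k n j m h2)
        (q⁻¹ • (bf k n j m h2 * bf k n i j h1) + (q⁻¹ * (q - q⁻¹)) • bf k n i m (h1.trans h2))
  | mixed {i l j m : Fin (n+1)} (h1 : i < l) (h2 : l < j) (h3 : j < m) :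
      BRel k q n (bf k n i j (h1.trans h2) * bf k n l m (h2.trans h3))
        (bf k n l m (h2.trans h3) * bf k n i j (h1.trans h2) +
          (q - q⁻¹) • (bf k n i m ((h1.trans h2).trans h3) * bf k n l j h2))

/-- The presented algebra `B`. -/
abbrev Balg (k : Type) [Field k] (q : k) (n : ℕ) := RingQuot (BRel k q n)

/-- The generator `b i j` of the presented algebra `B`. -/
def bB (k : Type) [Field k] (q : k) (n : ℕ) (i j : Fin (n+1)) (h : i < j) : Balg k q n :=
  RingQuot.mkAlgHom k (BRel k q n) (bf k n i j h)

end QSL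

/-!
The `y i j` satisfy the relations of `B` because conjugation by the diagonal generator `X l l`
rescales `X i j` by `q ^ ⟨ε_l, ε_j - ε_i⟩`: after moving all `X l l⁻¹` to the left, each relation
among the `y`'s becomes one of the relations of `O_q(B⁺)`. This gives `ψ`, whose image is
`O_q(N⁺)` since the `b i j` generate `B`.

For injectivity, `O_q(B⁺)` acts on `k[Λ] ⊗ B`, where `Λ = ℤ^{n+1}/ℤ(1,…,1)` is the character
lattice of the torus of `SL_{n+1}`: `X i j` shifts `Λ` by `ε_i`, rescales by `q ^ (γ_j - γ_i)` and
multiplies `B` on the left by `b i j` (by `1` if `i = j`, by `0` if `i > j`). Relative to these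
weights the relations of `O_q(SL_{n+1})` become those of `B`, and the quantum determinant acts as
the shift by `∑ ε_i = 0`. Then `y i j` acts on `e_0 ⊗ B` as left multiplication by `b i j`, so
`ψ x` sends `e_0 ⊗ 1` to `e_0 ⊗ x`.
-/

theorem Equiv.Perm.exists_apply_lt_of_ne_one {m : ℕ} {σ : Equiv.Perm (Fin m)} (hσ : σ ≠ 1) :
    ∃ i, σ i < i := by
  by_contra! hle
  refine hσ (Equiv.ext fun i => Fin.ext ?_)
  have hsum : ∑ i : Fin m, (i : ℕ) = ∑ i : Fin m, (σ i : ℕ) :=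
    (Equiv.sum_comp σ (fun i : Fin m => (i : ℕ))).symm
  exact ((Finset.sum_eq_sum_iff_of_le fun i _ => Fin.le_iff_val_le_val.mp (hle i)).mp
    hsum i (Finset.mem_univ i)).symm

theorem isUnit_of_mem_of_isUnit_prod {M : Type*} [Monoid M] {l : List M}
    (hl : l.Pairwise Commute) (hprod : IsUnit l.prod) {a : M} (ha : a ∈ l) : IsUnit a := by
  induction l with
  | nil => simp at ha
  | cons b l ih =>
    rw [List.pairwise_cons] at hl
    rw [List.prod_cons, (Commute.list_prod_right _ _ hl.1).isUnit_mul_iff] at hprod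
    rcases List.mem_cons.mp ha with rfl | ha
    · exact hprod.1
    · exact ih hl.2 hprod.2 ha

theorem Ring.inverse_mul_eq_smul_mul_inverse {R A : Type*} [CommSemiring R] [Semiring A]
    [Algebra R A] {a d : A} (hd : IsUnit d) {c : R} (h : a * d = c • (d * a)) :
    Ring.inverse d * a = c • (a * Ring.inverse d) :=
  calc Ring.inverse d * a = Ring.inverse d * (a * d) * Ring.inverse d := by
        rw [mul_assoc, Ring.mul_inverse_cancel_right _ _ hd]
    _ = c • (a * Ring.inverse d) := by
        rw [h, mul_smul_comm, smul_mul_assoc, Ring.inverse_mul_cancel_left _ _ hd]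

namespace QSL

theorem invCount_one {m : ℕ} : invCount (1 : Equiv.Perm (Fin m)) = 0 :=
  Finset.card_eq_zero.mpr (Finset.filter_eq_empty_iff.mpr fun _ _ h => lt_asymm h.1 h.2)

theorem map_qdet_of_lower_eq_zero {k A : Type} [Field k] [Semiring A] [Algebra k A] {q : k}
    {n : ℕ} (f : FreeAlgebra k (Fin (n+1) × Fin (n+1)) →ₐ[k] A)
    (hf : ∀ i j, j < i → f (Xf k n i j) = 0) :
    f (qdet k q n) = (List.ofFn fun i => f (Xf k n i i)).prod := by
  rw [qdet, map_sum, Finset.sum_eq_single 1 ?_ (by simp)]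
  · rw [invCount_one, pow_zero, one_smul, map_list_prod, List.map_ofFn]
    rfl
  · intro σ _ hσ
    obtain ⟨i, hi⟩ := Equiv.Perm.exists_apply_lt_of_ne_one hσ
    rw [map_smul, map_list_prod, List.prod_eq_zero, smul_zero]
    exact List.mem_map.mpr ⟨_, List.mem_ofFn.mpr ⟨i, rfl⟩, hf i (σ i) hi⟩

/-- `⟨ε_l, ε_j - ε_i⟩`: conjugation by `X l l` rescales `X i j` by `q ^ diagExp i j l`. -/
def diagExp {n : ℕ} (i j l : Fin (n+1)) : ℤ :=
  (if j = l then 1 else 0) - (if i = l then 1 else 0)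

section Borel

variable {k : Type} [Field k] {q : k} {n : ℕ}

theorem XBp_eq_zero {i j : Fin (n+1)} (h : j < i) : XBp k q n i j = 0 := by
  simpa [XBp] using RingQuot.mkAlgHom_rel k (BpRel.zero (k := k) (q := q) (n := n) h)

theorem mkAlgHom_mkAlgHom_eq_of_SLRel {x y : FreeAlgebra k (Fin (n+1) × Fin (n+1))}
    (h : SLRel k q n x y) :
    RingQuot.mkAlgHom k (BpRel k q n) (RingQuot.mkAlgHom k (SLRel k q n) x) =
      RingQuot.mkAlgHom k (BpRel k q n) (RingQuot.mkAlgHom k (SLRel k q n) y) := by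
  rw [RingQuot.mkAlgHom_rel k h]

theorem XBp_row (i : Fin (n+1)) {j m : Fin (n+1)} (h : j < m) :
    XBp k q n i j * XBp k q n i m = q • (XBp k q n i m * XBp k q n i j) := by
  simpa [XBp, XSL, Xf] using mkAlgHom_mkAlgHom_eq_of_SLRel (SLRel.row (k := k) (q := q) (i := i) h)

theorem XBp_col (j : Fin (n+1)) {i l : Fin (n+1)} (h : i < l) :
    XBp k q n i j * XBp k q n l j = q • (XBp k q n l j * XBp k q n i j) := by
  simpa [XBp, XSL, Xf] using mkAlgHom_mkAlgHom_eq_of_SLRel (SLRel.col (k := k) (q := q) (j := j) h)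

theorem XBp_swap {i l j m : Fin (n+1)} (h1 : i < l) (h2 : m < j) :
    XBp k q n i j * XBp k q n l m = XBp k q n l m * XBp k q n i j := by
  simpa [XBp, XSL, Xf] using mkAlgHom_mkAlgHom_eq_of_SLRel (SLRel.swap (k := k) (q := q) h1 h2)

theorem XBp_mixed {i l j m : Fin (n+1)} (h1 : i < l) (h2 : j < m) :
    XBp k q n i j * XBp k q n l m =
      XBp k q n l m * XBp k q n i j + (q - q⁻¹) • (XBp k q n i m * XBp k q n l j) := by
  simpa [XBp, XSL, Xf] using mkAlgHom_mkAlgHom_eq_of_SLRel (SLRel.mixed (k := k) (q := q) h1 h2)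

theorem prod_XBp_diag : (List.ofFn fun i => XBp k q n i i).prod = 1 := by
  have hdet := mkAlgHom_mkAlgHom_eq_of_SLRel (SLRel.det (k := k) (q := q) (n := n))
  rw [← AlgHom.comp_apply, map_qdet_of_lower_eq_zero (q := q) _ fun i j h => XBp_eq_zero h,
    map_one, map_one] at hdet
  exact hdet

theorem XBp_mul_XBp_diag (hq0 : q ≠ 0) (i j l : Fin (n+1)) :
    XBp k q n i j * XBp k q n l l = q ^ diagExp i j l • (XBp k q n l l * XBp k q n i j) := by
  rcases lt_or_ge j i with hji | hij
  · simp [XBp_eq_zero hji]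
  rcases lt_trichotomy l i with hli | rfl | hil
  · have h := XBp_mixed (k := k) (q := q) hli (hli.trans_le hij)
    rw [XBp_eq_zero hli, mul_zero, smul_zero, add_zero] at h
    simp [diagExp, hli.ne', (hli.trans_le hij).ne', h]
  · rcases hij.lt_or_eq with hij | rfl
    · have h := XBp_row (k := k) (q := q) l hij
      simp [diagExp, hij.ne', h, smul_smul, hq0]
    · simp [diagExp]
  rcases lt_trichotomy l j with hlj | rfl | hjl
  · simp [diagExp, hil.ne, hlj.ne', XBp_swap hil hlj]
  · simp [diagExp, hil.ne, XBp_col l hil]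
  · have h := XBp_mixed (k := k) (q := q) hil hjl
    rw [XBp_eq_zero hjl, mul_zero, smul_zero, add_zero] at h
    simp [diagExp, hil.ne, hjl.ne, h]

theorem commute_XBp_diag (hq0 : q ≠ 0) (i l : Fin (n+1)) :
    Commute (XBp k q n i i) (XBp k q n l l) :=
  (commute_iff_eq _ _).mpr (by simpa [diagExp] using XBp_mul_XBp_diag hq0 i i l)

theorem isUnit_XBp_diag (hq0 : q ≠ 0) (l : Fin (n+1)) : IsUnit (XBp k q n l l) :=
  isUnit_of_mem_of_isUnit_prod (List.pairwise_ofFn.mpr fun i j _ => commute_XBp_diag hq0 i j)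
    (by rw [prod_XBp_diag]; exact isUnit_one) (List.mem_ofFn.mpr ⟨l, rfl⟩)

theorem commute_inverse_XBp_diag (hq0 : q ≠ 0) (i l : Fin (n+1)) :
    Commute (Ring.inverse (XBp k q n i i)) (Ring.inverse (XBp k q n l l)) := by
  rw [Ring.inverse_of_isUnit (isUnit_XBp_diag hq0 i),
    Ring.inverse_of_isUnit (isUnit_XBp_diag hq0 l)]
  exact (commute_XBp_diag hq0 i l).units_inv_left.units_inv_right

theorem XBp_mul_inverse_XBp_diag (hq0 : q ≠ 0) (i j l : Fin (n+1)) :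
    XBp k q n i j * Ring.inverse (XBp k q n l l) =
      q ^ (-diagExp i j l) • (Ring.inverse (XBp k q n l l) * XBp k q n i j) := by
  rw [Ring.inverse_mul_eq_smul_mul_inverse (isUnit_XBp_diag hq0 l) (XBp_mul_XBp_diag hq0 i j l),
    smul_smul, ← zpow_add₀ hq0, neg_add_cancel, zpow_zero, one_smul]

theorem yY_diag (hq0 : q ≠ 0) (i : Fin (n+1)) : yY k q n i i = 1 :=
  Ring.inverse_mul_cancel _ (isUnit_XBp_diag hq0 i)

theorem yY_mul_yY (hq0 : q ≠ 0) (i j l m : Fin (n+1)) :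
    yY k q n i j * yY k q n l m = q ^ (-diagExp i j l) •
      (Ring.inverse (XBp k q n i i) * Ring.inverse (XBp k q n l l) *
        (XBp k q n i j * XBp k q n l m)) := by
  rw [yY, yY, mul_assoc, ← mul_assoc (XBp k q n i j), XBp_mul_inverse_XBp_diag hq0,
    smul_mul_assoc, mul_smul_comm, mul_assoc, mul_assoc]

theorem yY_row (hq0 : q ≠ 0) {i j m : Fin (n+1)} (h1 : i < j) (h2 : j < m) :
    yY k q n i j * yY k q n i m = q • (yY k q n i m * yY k q n i j) := by
  rw [yY_mul_yY hq0, yY_mul_yY hq0, XBp_row i h2]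
  simp [diagExp, h1.ne', (h1.trans h2).ne']

theorem yY_col (hq0 : q ≠ 0) {i l j : Fin (n+1)} (h1 : i < l) (h2 : l < j) :
    yY k q n i j * yY k q n l j = q • (yY k q n l j * yY k q n i j) := by
  rw [yY_mul_yY hq0, yY_mul_yY hq0, XBp_col j h1, (commute_inverse_XBp_diag hq0 l i).eq]
  simp [diagExp, h1.ne, h1.ne', (h1.trans h2).ne', h2.ne']

theorem yY_swap (hq0 : q ≠ 0) {i l m j : Fin (n+1)} (h1 : i < l) (h2 : l < m) (h3 : m < j) :
    yY k q n i j * yY k q n l m = yY k q n l m * yY k q n i j := by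
  rw [yY_mul_yY hq0, yY_mul_yY hq0, XBp_swap h1 h3, (commute_inverse_XBp_diag hq0 l i).eq]
  simp [diagExp, h1.ne, h1.ne', (h2.trans h3).ne', (h1.trans h2).ne']

theorem yY_comm (hq0 : q ≠ 0) {i j l m : Fin (n+1)} (h1 : i < j) (h2 : j < l) (h3 : l < m) :
    yY k q n i j * yY k q n l m = yY k q n l m * yY k q n i j := by
  have h := XBp_mixed (k := k) (q := q) (h1.trans h2) (h2.trans h3)
  rw [XBp_eq_zero h2, mul_zero, smul_zero, add_zero] at h
  rw [yY_mul_yY hq0, yY_mul_yY hq0, h, (commute_inverse_XBp_diag hq0 l i).eq]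
  simp [diagExp, (h1.trans h2).ne, (h1.trans h2).ne', h2.ne, ((h1.trans h2).trans h3).ne']

theorem yY_adj (hq0 : q ≠ 0) {i j m : Fin (n+1)} (h1 : i < j) (h2 : j < m) :
    yY k q n i j * yY k q n j m =
      q⁻¹ • (yY k q n j m * yY k q n i j) + (q⁻¹ * (q - q⁻¹)) • yY k q n i m := by
  -- `y j j = 1` puts the linear term in the same shape as the quadratic ones
  rw [← mul_one (yY k q n i m), ← yY_diag hq0 j, yY_mul_yY hq0, yY_mul_yY hq0, yY_mul_yY hq0,
    XBp_mixed h1 h2, (commute_inverse_XBp_diag hq0 j i).eq]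
  simp [diagExp, h1.ne, h1.ne', h2.ne', (h1.trans h2).ne', mul_add, smul_smul]

theorem yY_mixed (hq0 : q ≠ 0) {i l j m : Fin (n+1)} (h1 : i < l) (h2 : l < j) (h3 : j < m) :
    yY k q n i j * yY k q n l m =
      yY k q n l m * yY k q n i j + (q - q⁻¹) • (yY k q n i m * yY k q n l j) := by
  rw [yY_mul_yY hq0, yY_mul_yY hq0, yY_mul_yY hq0, XBp_mixed h1 h3,
    (commute_inverse_XBp_diag hq0 l i).eq]
  simp [diagExp, h1.ne, h1.ne', h2.ne', (h2.trans h3).ne', ((h1.trans h2).trans h3).ne', mul_add]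

theorem lift_yY_eq_of_BRel (hq0 : q ≠ 0) ⦃x y : FreeAlgebra k {p : Fin (n+1) × Fin (n+1) // p.1 < p.2}⦄
    (h : BRel k q n x y) :
    FreeAlgebra.lift k (fun p => yY k q n p.1.1 p.1.2) x =
      FreeAlgebra.lift k (fun p => yY k q n p.1.1 p.1.2) y := by
  cases h with
  | row h1 h2 => simpa [bf] using yY_row hq0 h1 h2
  | col h1 h2 => simpa [bf] using yY_col hq0 h1 h2
  | swap h1 h2 h3 => simpa [bf] using yY_swap hq0 h1 h2 h3
  | comm h1 h2 h3 => simpa [bf] using yY_comm hq0 h1 h2 h3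
  | adj h1 h2 => simpa [bf] using yY_adj hq0 h1 h2
  | mixed h1 h2 h3 => simpa [bf] using yY_mixed hq0 h1 h2 h3

def psi (hq0 : q ≠ 0) : Balg k q n →ₐ[k] OqBp k q n :=
  RingQuot.liftAlgHom k ⟨FreeAlgebra.lift k fun p => yY k q n p.1.1 p.1.2, lift_yY_eq_of_BRel hq0⟩

theorem psi_bB (hq0 : q ≠ 0) {i j : Fin (n+1)} (h : i < j) :
    psi hq0 (bB k q n i j h) = yY k q n i j := by
  simp [psi, bB, bf]

theorem range_psi (hq0 : q ≠ 0) : (psi hq0).range = OqNp k q n := by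
  have hcomp : (psi hq0).comp (RingQuot.mkAlgHom k (BRel k q n)) =
      FreeAlgebra.lift k fun p => yY k q n p.1.1 p.1.2 := by
    ext; simp [psi]
  have hgens : {a | ∃ i j : Fin (n+1), i < j ∧ a = yY k q n i j} =
      Set.range fun p : {p : Fin (n+1) × Fin (n+1) // p.1 < p.2} => yY k q n p.1.1 p.1.2 := by
    ext a
    simp [eq_comm]
  rw [OqNp, hgens, Algebra.adjoin_range_eq_range_freeAlgebra_lift, ← hcomp, AlgHom.range_comp,
    (AlgHom.range_eq_top _).mpr (RingQuot.mkAlgHom_surjective k _), Algebra.map_top]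

end Borel

/-- `ℤ^{n+1}/ℤ(1,…,1)`, the character lattice of the diagonal torus of `SL_{n+1}`. -/
abbrev CharLattice (n : ℕ) := (Fin (n+1) → ℤ) ⧸ AddSubgroup.zmultiples (1 : Fin (n+1) → ℤ)

def eps (n : ℕ) (l : Fin (n+1)) : CharLattice n := QuotientAddGroup.mk (Pi.single l 1)

def coordDiff {n : ℕ} (i j : Fin (n+1)) : CharLattice n →+ ℤ :=
  QuotientAddGroup.lift _ (Pi.evalAddMonoidHom (fun _ => ℤ) j - Pi.evalAddMonoidHom (fun _ => ℤ) i)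
    (by rintro _ ⟨m, rfl⟩; simp)

section Lattice

variable {n : ℕ}

theorem coordDiff_eps (i j l : Fin (n+1)) : coordDiff i j (eps n l) = diagExp i j l := by
  simp [coordDiff, eps, diagExp, Pi.single_apply]

@[simp] theorem coordDiff_self (i : Fin (n+1)) (γ : CharLattice n) : coordDiff i i γ = 0 := by
  induction γ using QuotientAddGroup.induction_on
  simp [coordDiff]

theorem coordDiff_add_coordDiff (i j l m : Fin (n+1)) (γ : CharLattice n) :
    coordDiff i m γ + coordDiff l j γ = coordDiff i j γ + coordDiff l m γ := by
  induction γ using QuotientAddGroup.induction_on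
  simp only [coordDiff, QuotientAddGroup.lift_mk, AddMonoidHom.sub_apply, Pi.evalAddMonoidHom_apply]
  ring

theorem sum_eps : ∑ l, eps n l = 0 := by
  have h : ∑ l, eps n l = QuotientAddGroup.mk (∑ l, Pi.single l (1 : ℤ)) :=
    (map_sum (QuotientAddGroup.mk' (AddSubgroup.zmultiples (1 : Fin (n+1) → ℤ))) _ _).symm
  rw [h, Finset.univ_sum_single (fun _ => (1 : ℤ)), QuotientAddGroup.eq_zero_iff]
  exact AddSubgroup.mem_zmultiples _

end Lattice

section Presented

variable {k : Type} [Field k] {q : k} {n : ℕ}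

theorem bB_row {i j m : Fin (n+1)} (h1 : i < j) (h2 : j < m) :
    bB k q n i j h1 * bB k q n i m (h1.trans h2) =
      q • (bB k q n i m (h1.trans h2) * bB k q n i j h1) := by
  simpa [bB] using RingQuot.mkAlgHom_rel k (BRel.row (k := k) (q := q) h1 h2)

theorem bB_col {i l j : Fin (n+1)} (h1 : i < l) (h2 : l < j) :
    bB k q n i j (h1.trans h2) * bB k q n l j h2 =
      q • (bB k q n l j h2 * bB k q n i j (h1.trans h2)) := by
  simpa [bB] using RingQuot.mkAlgHom_rel k (BRel.col (k := k) (q := q) h1 h2)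

theorem bB_swap {i l m j : Fin (n+1)} (h1 : i < l) (h2 : l < m) (h3 : m < j) :
    bB k q n i j ((h1.trans h2).trans h3) * bB k q n l m h2 =
      bB k q n l m h2 * bB k q n i j ((h1.trans h2).trans h3) := by
  simpa [bB] using RingQuot.mkAlgHom_rel k (BRel.swap (k := k) (q := q) h1 h2 h3)

theorem bB_comm {i j l m : Fin (n+1)} (h1 : i < j) (h2 : j < l) (h3 : l < m) :
    bB k q n i j h1 * bB k q n l m h3 = bB k q n l m h3 * bB k q n i j h1 := by
  simpa [bB] using RingQuot.mkAlgHom_rel k (BRel.comm (k := k) (q := q) h1 h2 h3)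

theorem bB_adj (hq0 : q ≠ 0) {i j m : Fin (n+1)} (h1 : i < j) (h2 : j < m) :
    q • (bB k q n i j h1 * bB k q n j m h2) =
      bB k q n j m h2 * bB k q n i j h1 + (q - q⁻¹) • bB k q n i m (h1.trans h2) := by
  have h := RingQuot.mkAlgHom_rel k (BRel.adj (k := k) (q := q) h1 h2)
  simp only [map_mul, map_add, map_smul] at h
  rw [← bB, ← bB, ← bB] at h
  rw [h, smul_add, smul_smul, smul_smul, mul_inv_cancel₀ hq0, ← mul_assoc, mul_inv_cancel₀ hq0,
    one_smul, one_mul]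

theorem bB_mixed {i l j m : Fin (n+1)} (h1 : i < l) (h2 : l < j) (h3 : j < m) :
    bB k q n i j (h1.trans h2) * bB k q n l m (h2.trans h3) =
      bB k q n l m (h2.trans h3) * bB k q n i j (h1.trans h2) +
        (q - q⁻¹) • (bB k q n i m ((h1.trans h2).trans h3) * bB k q n l j h2) := by
  simpa [bB] using RingQuot.mkAlgHom_rel k (BRel.mixed (k := k) (q := q) h1 h2 h3)

variable (k q n) in
def bEntry (i j : Fin (n+1)) : Balg k q n :=
  if h : i < j then bB k q n i j h else if i = j then 1 else 0

@[simp] theorem bEntry_of_lt {i j : Fin (n+1)} (h : i < j) : bEntry k q n i j = bB k q n i j h :=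
  dif_pos h

@[simp] theorem bEntry_self (i : Fin (n+1)) : bEntry k q n i i = 1 := by
  simp [bEntry]

@[simp] theorem bEntry_of_gt {i j : Fin (n+1)} (h : j < i) : bEntry k q n i j = 0 := by
  simp [bEntry, h.not_gt, h.ne']

theorem bEntry_row (hq0 : q ≠ 0) (i : Fin (n+1)) {j m : Fin (n+1)} (h : j < m) :
    q ^ diagExp i j i • (bEntry k q n i j * bEntry k q n i m) =
      q • q ^ diagExp i m i • (bEntry k q n i m * bEntry k q n i j) := by
  rcases lt_trichotomy j i with hji | rfl | hij
  · simp [hji]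
  · simp [diagExp, h, h.ne', hq0]
  · simp [diagExp, hij, hij.trans h, hij.ne', (hij.trans h).ne', bB_row hij h, smul_smul, hq0]

theorem bEntry_col {i l : Fin (n+1)} (j : Fin (n+1)) (h : i < l) :
    q ^ diagExp i j l • (bEntry k q n i j * bEntry k q n l j) =
      q • q ^ diagExp l j i • (bEntry k q n l j * bEntry k q n i j) := by
  rcases lt_trichotomy j l with hjl | rfl | hlj
  · simp [hjl]
  · simp [diagExp, h, h.ne]
  · simp [diagExp, h.trans hlj, hlj, hlj.ne', h.ne, h.ne', (h.trans hlj).ne', bB_col h hlj]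

theorem bEntry_swap {i l j m : Fin (n+1)} (h1 : i < l) (h2 : m < j) :
    q ^ diagExp i j l • (bEntry k q n i j * bEntry k q n l m) =
      q ^ diagExp l m i • (bEntry k q n l m * bEntry k q n i j) := by
  rcases lt_trichotomy m l with hml | rfl | hlm
  · simp [hml]
  · simp [diagExp, h1.ne, h2.ne', h1.trans h2]
  · simp [diagExp, h1.ne, h1.ne', (hlm.trans h2).ne', (h1.trans hlm).ne', (h1.trans hlm).trans h2,
      hlm, bB_swap h1 hlm h2]

theorem bEntry_mixed (hq0 : q ≠ 0) {i l j m : Fin (n+1)} (h1 : i < l) (h2 : j < m) :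
    q ^ diagExp i j l • (bEntry k q n i j * bEntry k q n l m) =
      q ^ diagExp l m i • (bEntry k q n l m * bEntry k q n i j) +
        (q - q⁻¹) • q ^ diagExp i m l • (bEntry k q n i m * bEntry k q n l j) := by
  rcases lt_or_ge j i with hji | hij
  · simp [hji, hji.trans h1]
  rcases lt_or_ge m l with hml | hlm
  · simp [hml, h2.trans hml]
  have him : i < m := hij.trans_lt h2
  rcases lt_trichotomy j l with hjl | rfl | hlj
  · have hcomm : bEntry k q n i j * bEntry k q n l m = bEntry k q n l m * bEntry k q n i j := by
      rcases hij.lt_or_eq with hij | rfl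
      · rcases hlm.lt_or_eq with hlm | rfl
        · simp [hij, hlm, bB_comm hij hjl hlm]
        · simp [hij]
      · simp
    simp [diagExp, hjl, hjl.ne, h1.ne, h1.ne', him.ne', hcomm]
  · simp [diagExp, h1, h2, him, h1.ne, h1.ne', h2.ne', him.ne', bB_adj hq0 h1 h2]
  · simp [diagExp, hlj, him, h1.trans hlj, hlj.trans h2, hlj.ne', h1.ne, h1.ne', him.ne',
      (hlj.trans h2).ne', bB_mixed h1 hlj h2]

end Presented

section Representation

variable {k : Type} [Field k] {q : k} {n : ℕ}

variable (k q n) in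
/-- `X i j` acts on `k[Λ] ⊗ B` by `e_γ ⊗ b ↦ q ^ (γ j - γ i) e_{εᵢ + γ} ⊗ bEntry i j * b`. -/
def opX (i j : Fin (n+1)) :
    Module.End k (CharLattice n →₀ Balg k q n) :=
  Finsupp.lsum k fun γ => q ^ coordDiff i j γ •
    (Finsupp.lsingle (eps n i + γ)).comp (LinearMap.mulLeft k (bEntry k q n i j))

@[simp] theorem opX_single (i j : Fin (n+1)) (γ : CharLattice n) (b : Balg k q n) :
    opX k q n i j (Finsupp.single γ b) =
      q ^ coordDiff i j γ • Finsupp.single (eps n i + γ) (bEntry k q n i j * b) := by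
  simp [opX]

theorem opX_mul_opX_single (hq0 : q ≠ 0) (i j l m : Fin (n+1)) (γ : CharLattice n)
    (b : Balg k q n) :
    (opX k q n i j * opX k q n l m) (Finsupp.single γ b) =
      q ^ (coordDiff i j γ + coordDiff l m γ) • q ^ diagExp i j l •
        Finsupp.single (eps n i + eps n l + γ) (bEntry k q n i j * bEntry k q n l m * b) := by
  rw [Module.End.mul_apply, opX_single, map_smul, opX_single, map_add, coordDiff_eps, smul_smul,
    smul_smul, add_assoc, mul_assoc (bEntry k q n i j)]
  congr 1
  rw [zpow_add₀ hq0, zpow_add₀ hq0]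
  ring

theorem opX_mul_opX_eq (hq0 : q ≠ 0) {i j l m : Fin (n+1)} {s t : k}
    (h : q ^ diagExp i j l • (bEntry k q n i j * bEntry k q n l m) =
      s • q ^ diagExp l m i • (bEntry k q n l m * bEntry k q n i j) +
        t • q ^ diagExp i m l • (bEntry k q n i m * bEntry k q n l j)) :
    opX k q n i j * opX k q n l m =
      s • (opX k q n l m * opX k q n i j) + t • (opX k q n i m * opX k q n l j) := by
  refine Finsupp.lhom_ext fun γ b => ?_
  have hb := congrArg (q ^ (coordDiff i j γ + coordDiff l m γ) •
    (Finsupp.lsingle (eps n i + eps n l + γ) ∘ₗ LinearMap.mulRight k b)) h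
  simp only [LinearMap.smul_apply, map_add, map_smul, LinearMap.comp_apply,
    LinearMap.mulRight_apply, Finsupp.lsingle_apply] at hb
  rw [LinearMap.add_apply, LinearMap.smul_apply, LinearMap.smul_apply, opX_mul_opX_single hq0,
    opX_mul_opX_single hq0, opX_mul_opX_single hq0, add_comm (coordDiff l m γ),
    coordDiff_add_coordDiff i j l m, add_comm (eps n l)]
  linear_combination (norm := module) hb

theorem opX_of_gt {i j : Fin (n+1)} (h : j < i) : opX k q n i j = 0 :=
  Finsupp.lhom_ext fun γ b => by simp [h]

variable (k q n) in
def translate : Multiplicative (CharLattice n) →* Module.End k (CharLattice n →₀ Balg k q n) where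
  toFun γ := Finsupp.lmapDomain _ k (γ.toAdd + ·)
  map_one' := Finsupp.lhom_ext fun γ b => by simp
  map_mul' γ δ := Finsupp.lhom_ext fun ζ b => by simp [add_assoc]

@[simp] theorem translate_single (γ δ : CharLattice n) (b : Balg k q n) :
    translate k q n (.ofAdd γ) (Finsupp.single δ b) = Finsupp.single (γ + δ) b := by
  simp [translate]

theorem opX_self (i : Fin (n+1)) : opX k q n i i = translate k q n (.ofAdd (eps n i)) :=
  Finsupp.lhom_ext fun γ b => by simp

theorem prod_opX_diag : (List.ofFn fun i => opX k q n i i).prod = 1 := by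
  simp_rw [opX_self]
  change (List.ofFn (translate k q n ∘ fun i => .ofAdd (eps n i))).prod = 1
  rw [← List.map_ofFn, ← map_list_prod, List.prod_ofFn, ← ofAdd_sum, sum_eps,
    ofAdd_zero, map_one]

theorem lift_opX_eq_of_SLRel (hq0 : q ≠ 0) ⦃x y : FreeAlgebra k (Fin (n+1) × Fin (n+1))⦄
    (h : SLRel k q n x y) :
    FreeAlgebra.lift k (fun p => opX k q n p.1 p.2) x =
      FreeAlgebra.lift k (fun p => opX k q n p.1 p.2) y := by
  cases h with
  | row h =>
    simpa [Xf] using opX_mul_opX_eq hq0 (t := 0) (by simpa using bEntry_row hq0 _ h)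
  | col h =>
    simpa [Xf] using opX_mul_opX_eq hq0 (t := 0) (by simpa using bEntry_col _ h)
  | swap h1 h2 =>
    simpa [Xf] using opX_mul_opX_eq hq0 (s := 1) (t := 0) (by simpa using bEntry_swap h1 h2)
  | mixed h1 h2 =>
    simpa [Xf] using opX_mul_opX_eq hq0 (s := 1) (by simpa using bEntry_mixed hq0 h1 h2)
  | det =>
    rw [map_qdet_of_lower_eq_zero _ fun i j h => by simp [Xf, opX_of_gt h], map_one]
    simpa [Xf] using prod_opX_diag

variable (k q n) in
def repSL (hq0 : q ≠ 0) : OqSL k q n →ₐ[k] Module.End k (CharLattice n →₀ Balg k q n) :=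
  RingQuot.liftAlgHom k ⟨FreeAlgebra.lift k fun p => opX k q n p.1 p.2, lift_opX_eq_of_SLRel hq0⟩

variable (k q n) in
def repBp (hq0 : q ≠ 0) : OqBp k q n →ₐ[k] Module.End k (CharLattice n →₀ Balg k q n) :=
  RingQuot.liftAlgHom k ⟨repSL k q n hq0, fun _ _ h => by
    cases h with
    | zero h =>
      rw [map_zero, repSL, XSL, RingQuot.liftAlgHom_mkAlgHom_apply, Xf, FreeAlgebra.lift_ι_apply,
        opX_of_gt h]⟩

theorem repBp_XBp (hq0 : q ≠ 0) (i j : Fin (n+1)) :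
    repBp k q n hq0 (XBp k q n i j) = opX k q n i j := by
  rw [repBp, XBp, RingQuot.liftAlgHom_mkAlgHom_apply, repSL, XSL,
    RingQuot.liftAlgHom_mkAlgHom_apply, Xf, FreeAlgebra.lift_ι_apply]

theorem repBp_inverse_XBp_diag (hq0 : q ≠ 0) (i : Fin (n+1)) :
    repBp k q n hq0 (Ring.inverse (XBp k q n i i)) = translate k q n (.ofAdd (-eps n i)) := by
  refine left_inv_eq_right_inv (a := repBp k q n hq0 (XBp k q n i i)) ?_ ?_
  · rw [← map_mul, Ring.inverse_mul_cancel _ (isUnit_XBp_diag hq0 i), map_one]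
  · rw [repBp_XBp, opX_self, ← map_mul, ← ofAdd_add, add_neg_cancel, ofAdd_zero, map_one]

theorem repBp_yY_single (hq0 : q ≠ 0) (i j : Fin (n+1)) (γ : CharLattice n) (b : Balg k q n) :
    repBp k q n hq0 (yY k q n i j) (Finsupp.single γ b) =
      q ^ coordDiff i j γ • Finsupp.single γ (bEntry k q n i j * b) := by
  rw [yY, map_mul, Module.End.mul_apply, repBp_XBp, opX_single, map_smul,
    repBp_inverse_XBp_diag, translate_single, neg_add_cancel_left]

theorem repBp_psi_single_zero (hq0 : q ≠ 0) (x y : Balg k q n) :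
    repBp k q n hq0 (psi hq0 x) (Finsupp.single 0 y) = Finsupp.single 0 (x * y) := by
  obtain ⟨a, rfl⟩ := RingQuot.mkAlgHom_surjective k (BRel k q n) x
  induction a using FreeAlgebra.induction generalizing y with
  | grade0 r =>
    rw [AlgHom.commutes, AlgHom.commutes, AlgHom.commutes, Module.algebraMap_end_apply,
      Finsupp.smul_single, Algebra.smul_def]
  | grade1 p =>
    rw [psi, RingQuot.liftAlgHom_mkAlgHom_apply, FreeAlgebra.lift_ι_apply, repBp_yY_single,
      map_zero, zpow_zero, one_smul, bEntry_of_lt p.2]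
    rfl
  | mul a b ha hb => simp only [map_mul, Module.End.mul_apply, hb, ha, mul_assoc]
  | add a b ha hb => simp only [map_add, LinearMap.add_apply, ha, hb, add_mul, Finsupp.single_add]

theorem psi_injective (hq0 : q ≠ 0) : Function.Injective (psi (k := k) (n := n) hq0) := by
  refine Function.Injective.of_comp (f := fun a => repBp k q n hq0 a (Finsupp.single 0 1)) ?_
  convert Finsupp.single_injective (0 : CharLattice n) using 1
  ext x
  simp only [Function.comp_apply, repBp_psi_single_zero, mul_one]

end Representation
end QSL

open QSL in
theorem presented_algebra_iso_OqNp_general (k : Type) [Field k] (q : k) (hq0 : q ≠ 0) (n : ℕ) :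
    ∃ ψ : Balg k q n →ₐ[k] OqBp k q n,
      (∀ (i j : Fin (n+1)) (h : i < j), ψ (bB k q n i j h) = yY k q n i j) ∧
      Function.Injective ψ ∧
      ψ.range = OqNp k q n :=
  ⟨psi hq0, fun _ _ => psi_bB hq0, psi_injective hq0, range_psi hq0⟩

open QSL in
/-- There is a well-defined `k`-algebra homomorphism `ψ : B → O_q(B⁺)` with `ψ(b_{ij}) = y_{ij}`,
and `ψ` is an isomorphism of `B` onto the subalgebra `O_q(N⁺)`. -/
theorem presented_algebra_iso_OqNp (k : Type) [Field k] (q : k) (hq0 : q ≠ 0)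
    (hq : ∀ m : ℕ, 0 < m → q ^ m ≠ 1) (n : ℕ) (hn : 1 ≤ n) :
    ∃ ψ : Balg k q n →ₐ[k] OqBp k q n,
      (∀ (i j : Fin (n+1)) (h : i < j), ψ (bB k q n i j h) = yY k q n i j) ∧
      Function.Injective ψ ∧
      ψ.range = OqNp k q n :=
  presented_algebra_iso_OqNp_general k q hq0 n
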